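/- arXiv:1208.0396 — 2 statements merged into one kernel-verified Lean document; each statement's English description precedes it below -/
import Mathlib

section
/- Let A and B be lists over a type α with decidable equality, of lengths m and n respectively. The minimum length ℓ of a directed path from (0,0) to (m,n) in the LCS grid graph G_{A,B} equals m + n − lcsLen(A,B). -/
/-!
Each horizontal or vertical step of a grid path raises `i + j` by one and each diagonal step by
two, and the diagonal steps read off a common subsequence of `A` and `B`; so a path of length `ℓ`
from `(0, 0)` to `(m, n)` exhibits a common subsequence of length `m + n - ℓ`. Conversely, a
common subsequence `l` is traced by a path that steps diagonally exactly at the letters of `l`,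
of length `m + n - |l|`. Both directions are proved by peeling off the first edge, for paths
from an arbitrary `(i, j)` against the suffixes `A.drop i` and `B.drop j`.
-/

/-- `lcsLen s t` is the maximum length of a list that is a sublist
(subsequence) of both `s` and `t`. -/
def lcsLen {α : Type*} [DecidableEq α] (s t : List α) : ℕ :=
  ((s.sublists.filter (fun l => decide (l.Sublist t))).map List.length).foldr max 0

/-- Edge relation of the LCS grid graph `G_{C,B}`: horizontal, vertical,
and (on character matches) diagonal edges. -/
def GridEdge {α : Type*} (C B : List α) (u v : ℕ × ℕ) : Prop :=
  (v = (u.1, u.2 + 1) ∧ u.1 ≤ C.length ∧ u.2 < B.length) ∨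
  (v = (u.1 + 1, u.2) ∧ u.1 < C.length ∧ u.2 ≤ B.length) ∨
  (v = (u.1 + 1, u.2 + 1) ∧
    ∃ (h1 : u.1 < C.length) (h2 : u.2 < B.length), C.get ⟨u.1, h1⟩ = B.get ⟨u.2, h2⟩)

/-- `IsGridPath C B ℓ u v p` : `p` is a directed path of length `ℓ`
from `u` to `v` in the LCS grid graph `G_{C,B}`. -/
def IsGridPath {α : Type*} (C B : List α) (ℓ : ℕ) (u v : ℕ × ℕ)
    (p : Fin (ℓ + 1) → ℕ × ℕ) : Prop :=
  p 0 = u ∧ p (Fin.last ℓ) = v ∧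
    ∀ k : Fin ℓ, GridEdge C B (p k.castSucc) (p k.succ)

section LCS

variable {α : Type*} [DecidableEq α]

private lemma length_mem_lcsCandidates {l s t : List α} (hs : l.Sublist s) (ht : l.Sublist t) :
    l.length ∈ (s.sublists.filter (fun l => decide (l.Sublist t))).map List.length :=
  List.mem_map_of_mem (List.mem_filter.2 ⟨List.mem_sublists.2 hs, decide_eq_true ht⟩)

theorem length_le_lcsLen {l s t : List α} (hs : l.Sublist s) (ht : l.Sublist t) :
    l.length ≤ lcsLen s t :=
  List.le_max_of_le (length_mem_lcsCandidates hs ht) le_rfl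

theorem exists_sublist_length_eq_lcsLen (s t : List α) :
    ∃ l : List α, l.Sublist s ∧ l.Sublist t ∧ l.length = lcsLen s t := by
  have hne :=
    List.ne_nil_of_mem (length_mem_lcsCandidates (List.nil_sublist s) (List.nil_sublist t))
  have hmem := List.maximum_mem (List.foldr_max_of_ne_nil hne).symm
  obtain ⟨l, hl, hlen⟩ := List.mem_map.1 hmem
  obtain ⟨hs, ht⟩ := List.mem_filter.1 hl
  exact ⟨l, List.mem_sublists.1 hs, of_decide_eq_true ht, hlen⟩

end LCS

section GridPath

variable {α : Type*} {A B : List α}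

theorem exists_isGridPath_zero_iff {u v : ℕ × ℕ} :
    (∃ p, IsGridPath A B 0 u v p) ↔ u = v := by
  constructor
  · rintro ⟨p, h0, hlast, -⟩
    exact h0.symm.trans hlast
  · rintro rfl
    exact ⟨fun _ => u, rfl, rfl, fun k => k.elim0⟩

theorem exists_isGridPath_succ_iff {ℓ : ℕ} {u v : ℕ × ℕ} :
    (∃ p, IsGridPath A B (ℓ + 1) u v p) ↔
      ∃ w, GridEdge A B u w ∧ ∃ p, IsGridPath A B ℓ w v p := by
  constructor
  · rintro ⟨p, h0, hlast, hedge⟩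
    refine ⟨p 1, h0 ▸ hedge 0, Fin.tail p, rfl, hlast, fun k => ?_⟩
    simpa [Fin.tail] using hedge k.succ
  · rintro ⟨w, hw, p, h0, hlast, hedge⟩
    refine ⟨Fin.cons u p, rfl, hlast, Fin.cases (by simpa [h0] using hw) fun k => ?_⟩
    simpa using hedge k

theorem IsGridPath.exists_sublist {ℓ i j : ℕ} {p : Fin (ℓ + 1) → ℕ × ℕ}
    (hp : IsGridPath A B ℓ (i, j) (A.length, B.length) p) :
    ∃ l : List α, l.Sublist (A.drop i) ∧ l.Sublist (B.drop j) ∧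
      (A.length - i) + (B.length - j) ≤ ℓ + l.length := by
  induction ℓ generalizing i j with
  | zero =>
    obtain ⟨rfl, rfl⟩ := Prod.ext_iff.1 (exists_isGridPath_zero_iff.1 ⟨p, hp⟩)
    exact ⟨[], List.nil_sublist _, List.nil_sublist _, by simp⟩
  | succ ℓ ih =>
    obtain ⟨w, hw, q, hq⟩ := exists_isGridPath_succ_iff.1 ⟨p, hp⟩
    rcases hw with ⟨rfl, -, hj⟩ | ⟨rfl, hi, -⟩ | ⟨rfl, hi, hj, hij⟩
    · obtain ⟨l, hA, hB, hlen⟩ := ih hq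
      refine ⟨l, hA, hB.trans ?_, by omega⟩
      rw [List.drop_eq_getElem_cons hj]
      exact List.sublist_cons_self _ _
    · obtain ⟨l, hA, hB, hlen⟩ := ih hq
      refine ⟨l, hA.trans ?_, hB, by omega⟩
      rw [List.drop_eq_getElem_cons hi]
      exact List.sublist_cons_self _ _
    · obtain ⟨l, hA, hB, hlen⟩ := ih hq
      have hij : A[i] = B[j] := hij
      refine ⟨A[i] :: l, ?_, ?_, by simp only [List.length_cons]; omega⟩
      · rw [List.drop_eq_getElem_cons hi]
        exact hA.cons_cons _
      · rw [List.drop_eq_getElem_cons hj, hij]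
        exact hB.cons_cons _

theorem exists_isGridPath_of_sublist {ℓ i j : ℕ} {l : List α}
    (hi : i ≤ A.length) (hj : j ≤ B.length)
    (hA : l.Sublist (A.drop i)) (hB : l.Sublist (B.drop j))
    (hlen : ℓ + l.length = (A.length - i) + (B.length - j)) :
    ∃ p, IsGridPath A B ℓ (i, j) (A.length, B.length) p := by
  induction ℓ generalizing i j l with
  | zero =>
    have hlA := hA.length_le
    have hlB := hB.length_le
    rw [List.length_drop] at hlA hlB
    exact exists_isGridPath_zero_iff.2 (by rw [Prod.mk.injEq]; omega)
  | succ ℓ ih =>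
    have hlA := hA.length_le
    have hlB := hB.length_le
    rw [List.length_drop] at hlA hlB
    refine exists_isGridPath_succ_iff.2 ?_
    obtain hi' | rfl := hi.lt_or_eq
    · rcases List.sublist_cons_iff.1 (List.drop_eq_getElem_cons hi' ▸ hA) with
        hA' | ⟨r, rfl, hA'⟩
      · exact ⟨(i + 1, j), Or.inr (Or.inl ⟨rfl, hi', hj⟩), ih hi' hj hA' hB (by omega)⟩
      have hj' : j < B.length := by simp only [List.length_cons] at hlB; omega
      rcases List.sublist_cons_iff.1 (List.drop_eq_getElem_cons hj' ▸ hB) with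
        hB' | ⟨r', hr, hB'⟩
      · exact ⟨(i, j + 1), Or.inl ⟨rfl, hi, hj'⟩, ih hi hj' hA hB' (by omega)⟩
      obtain ⟨hij, rfl⟩ := List.cons_eq_cons.1 hr
      exact ⟨(i + 1, j + 1), Or.inr (Or.inr ⟨rfl, hi', hj', hij⟩),
        ih hi' hj' hA' hB' (by simp only [List.length_cons] at hlen; omega)⟩
    · have hl : l = [] := List.eq_nil_of_length_eq_zero (by omega)
      have hj' : j < B.length := by omega
      subst hl
      exact ⟨(A.length, j + 1), Or.inl ⟨rfl, hi, hj'⟩,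
        ih hi hj' hA (List.nil_sublist _) (by simp only [List.length_nil] at hlen ⊢; omega)⟩

end GridPath

/-- The minimum length of a directed path from `(0,0)` to `(m,n)` in the LCS
grid graph `G_{A,B}` equals `m + n - lcsLen A B`. -/
theorem shortest_grid_path_length {α : Type*} [DecidableEq α] (A B : List α) :
    IsLeast {ℓ : ℕ | ∃ p : Fin (ℓ + 1) → ℕ × ℕ,
        IsGridPath A B ℓ (0, 0) (A.length, B.length) p}
      (A.length + B.length - lcsLen A B) := by
  obtain ⟨l, hA, hB, hl⟩ := exists_sublist_length_eq_lcsLen A B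
  refine ⟨exists_isGridPath_of_sublist (Nat.zero_le _) (Nat.zero_le _) hA hB ?_,
    fun ℓ ⟨p, hp⟩ => ?_⟩
  · have hlA := hA.length_le
    omega
  · obtain ⟨l', hA', hB', hlen⟩ := hp.exists_sublist
    rw [List.drop_zero] at hA' hB'
    have hle := length_le_lcsLen hA' hB'
    omega
end

section
/- Let A and B be lists over a type α with decidable equality, of lengths m and n respectively, and let k satisfy 0 ≤ k ≤ m. In the LCS grid graph G_{A++A, B} built from the doubled string A ++ A (of length 2m) and B, the minimum length of a directed path from (k,0) to (m+k, n) equals m + n − lcsLen(cut(A,k), B). -/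
open List

theorem isGreatest_lcsLen {α : Type*} [DecidableEq α] (s t : List α) :
    IsGreatest {ℓ | ∃ w : List α, w <+ s ∧ w <+ t ∧ w.length = ℓ} (lcsLen s t) := by
  set L := (s.sublists.filter fun l => decide (l <+ t)).map length
  have hmem : ∀ ℓ, ℓ ∈ L ↔ ∃ w : List α, w <+ s ∧ w <+ t ∧ w.length = ℓ := by
    simp [L, and_assoc]
  have hne : L ≠ [] := ne_nil_of_mem ((hmem 0).2 ⟨[], by simp, by simp, rfl⟩)
  refine ⟨(hmem _).1 (maximum_mem (foldr_max_of_ne_nil hne).symm), ?_⟩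
  rintro _ ⟨w, hws, hwt, rfl⟩
  exact le_max_of_le ((hmem _).2 ⟨w, hws, hwt, rfl⟩) le_rfl

namespace List

variable {β : Type*}

theorem extract_succ_left_sublist (L : List β) (i n : ℕ) :
    L.extract (i + 1) n <+ L.extract i n := by
  rw [extract_eq_take_drop, extract_eq_take_drop, ← tail_drop, Nat.sub_add_eq,
    ← tail_take_eq_take_tail]
  exact tail_sublist _

theorem extract_eq_getElem_cons {L : List β} {i n : ℕ} (hi : i < L.length) (hn : i < n) :
    L.extract i n = L[i] :: L.extract (i + 1) n := by
  rw [extract_eq_take_drop, drop_eq_getElem_cons hi, show n - i = n - (i + 1) + 1 by omega,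
    take_succ_cons, extract_eq_take_drop]

theorem extract_append_self {A : List β} {k : ℕ} (hk : k ≤ A.length) :
    (A ++ A).extract k (A.length + k) = A.rotate k := by
  rw [extract_eq_take_drop, drop_append_of_le_length hk, take_append,
    take_of_length_le (by simp), rotate_eq_drop_append_take hk]
  congr 2
  simp only [length_drop]
  omega

theorem length_le_sub_of_sublist_extract {w L : List β} {i n : ℕ} (h : w <+ L.extract i n) :
    w.length ≤ n - i :=
  h.length_le.trans (length_take_le _ _)

end List

section GridPath

variable {α : Type*} {C B : List α}

theorem gridEdge_right {i j : ℕ} (hi : i ≤ C.length) (hj : j < B.length) :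
    GridEdge C B (i, j) (i, j + 1) :=
  Or.inl ⟨rfl, hi, hj⟩

theorem gridEdge_down {i j : ℕ} (hi : i < C.length) (hj : j ≤ B.length) :
    GridEdge C B (i, j) (i + 1, j) :=
  Or.inr <| Or.inl ⟨rfl, hi, hj⟩

theorem gridEdge_diag {i j : ℕ} (hi : i < C.length) (hj : j < B.length) (h : C[i] = B[j]) :
    GridEdge C B (i, j) (i + 1, j + 1) :=
  Or.inr <| Or.inr ⟨rfl, hi, hj, h⟩

theorem isGridPath_zero (u : ℕ × ℕ) : IsGridPath C B 0 u u (fun _ => u) :=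
  ⟨rfl, rfl, Fin.elim0⟩

theorem IsGridPath.cons {ℓ : ℕ} {u w v : ℕ × ℕ} {p : Fin (ℓ + 1) → ℕ × ℕ}
    (huw : GridEdge C B u w) (hp : IsGridPath C B ℓ w v p) :
    IsGridPath C B (ℓ + 1) u v (Fin.cons u p) := by
  obtain ⟨h0, hlast, hedge⟩ := hp
  refine ⟨rfl, by simpa [← Fin.succ_last] using hlast, fun k => ?_⟩
  cases k using Fin.cases with
  | zero => simpa [h0] using huw
  | succ k => simpa [← Fin.succ_castSucc] using hedge k

theorem IsGridPath.tail {ℓ : ℕ} {u v : ℕ × ℕ} {p : Fin (ℓ + 2) → ℕ × ℕ}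
    (hp : IsGridPath C B (ℓ + 1) u v p) :
    GridEdge C B u (p 1) ∧ IsGridPath C B ℓ (p 1) v (Fin.tail p) := by
  obtain ⟨h0, hlast, hedge⟩ := hp
  refine ⟨h0 ▸ hedge 0, rfl, by simpa [Fin.tail, ← Fin.succ_last] using hlast, fun k => ?_⟩
  simpa [Fin.tail, ← Fin.succ_castSucc] using hedge k.succ

theorem IsGridPath.exists_sublist_s4 {ℓ : ℕ} {u v : ℕ × ℕ} {p : Fin (ℓ + 1) → ℕ × ℕ}
    (hp : IsGridPath C B ℓ u v p) :
    ∃ w : List α, w <+ C.extract u.1 v.1 ∧ w <+ B.extract u.2 v.2 ∧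
      v.1 - u.1 + (v.2 - u.2) ≤ ℓ + w.length := by
  induction ℓ generalizing u with
  | zero =>
    obtain ⟨rfl, rfl, -⟩ := hp
    exact ⟨[], nil_sublist _, nil_sublist _, by simp⟩
  | succ ℓ ih =>
    obtain ⟨hedge, htail⟩ := hp.tail
    obtain ⟨w, hwC, hwB, hlen⟩ := ih htail
    rcases hedge with ⟨hu, -, -⟩ | ⟨hu, -, -⟩ | ⟨hu, hi, hj, hmatch⟩ <;>
      rw [hu] at hwC hwB hlen
    · exact ⟨w, hwC, hwB.trans (extract_succ_left_sublist _ _ _), by omega⟩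
    · exact ⟨w, hwC.trans (extract_succ_left_sublist _ _ _), hwB, by omega⟩
    · by_cases hlt : u.1 < v.1 ∧ u.2 < v.2
      · refine ⟨C[u.1] :: w, ?_, ?_, by simp; omega⟩
        · rw [extract_eq_getElem_cons hi hlt.1]; exact hwC.cons_cons _
        · have hmatch : C[u.1] = B[u.2] := hmatch
          rw [extract_eq_getElem_cons hj hlt.2, hmatch]
          exact hwB.cons_cons _
      · exact ⟨w, hwC.trans (extract_succ_left_sublist _ _ _),
          hwB.trans (extract_succ_left_sublist _ _ _), by omega⟩

theorem exists_isGridPath_of_sublist_s4 {w : List α} {i j i' j' : ℕ}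
    (hii' : i ≤ i') (hi' : i' ≤ C.length) (hjj' : j ≤ j') (hj' : j' ≤ B.length)
    (hwC : w <+ C.extract i i') (hwB : w <+ B.extract j j') :
    ∃ p, IsGridPath C B (i' - i + (j' - j) - w.length) (i, j) (i', j') p := by
  have hwi := length_le_sub_of_sublist_extract hwC
  -- The first character of the `C`-window is skipped (down step) or starts `w`; in the latter
  -- case the first character of the `B`-window is skipped (right step) or matched (diagonal).
  have step_right (hj : j < j') (hw : w <+ B.extract (j + 1) j') :
      ∃ p, IsGridPath C B (i' - i + (j' - j) - w.length) (i, j) (i', j') p := by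
    obtain ⟨p, hp⟩ := exists_isGridPath_of_sublist_s4 hii' hi' hj hj' hwC hw
    rw [show i' - i + (j' - j) - w.length = i' - i + (j' - (j + 1)) - w.length + 1 by omega]
    exact ⟨_, hp.cons (gridEdge_right (by omega) (by omega))⟩
  rcases hii'.eq_or_lt with rfl | hi
  · obtain rfl : w = [] := by simpa using hwC
    rcases hjj'.eq_or_lt with rfl | hj
    · rw [show i - i + (j - j) - [].length = 0 by simp]
      exact ⟨_, isGridPath_zero _⟩
    · exact step_right hj (nil_sublist _)
  rw [extract_eq_getElem_cons (hi.trans_le hi') hi] at hwC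
  rcases sublist_cons_iff.1 hwC with hwC' | ⟨w', rfl, hwC'⟩
  · have := length_le_sub_of_sublist_extract hwC'
    obtain ⟨p, hp⟩ := exists_isGridPath_of_sublist_s4 hi hi' hjj' hj' hwC' hwB
    rw [show i' - i + (j' - j) - w.length = i' - (i + 1) + (j' - j) - w.length + 1 by omega]
    exact ⟨_, hp.cons (gridEdge_down (by omega) (by omega))⟩
  rcases hjj'.eq_or_lt with rfl | hj
  · simp at hwB
  rw [extract_eq_getElem_cons (hj.trans_le hj') hj] at hwB
  rcases sublist_cons_iff.1 hwB with hwB' | ⟨r, hr, hwB'⟩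
  · exact step_right hj hwB'
  obtain ⟨hmatch, rfl⟩ := cons_eq_cons.1 hr
  have := length_le_sub_of_sublist_extract hwC'
  obtain ⟨p, hp⟩ := exists_isGridPath_of_sublist_s4 hi hi' hj hj' hwC' hwB'
  rw [length_cons, show i' - i + (j' - j) - (w'.length + 1) =
    i' - (i + 1) + (j' - (j + 1)) - w'.length + 1 by omega]
  exact ⟨_, hp.cons (gridEdge_diag (by omega) (by omega) hmatch)⟩
termination_by i' - i + (j' - j)

end GridPath

/-- In the grid graph of the doubled string `A ++ A` against `B`, the minimum
length of a directed path from `(k,0)` to `(m+k,n)` equals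
`m + n - lcsLen (A.rotate k) B`. -/
theorem shortest_path_in_doubled_grid {α : Type*} [DecidableEq α]
    (A B : List α) (k : ℕ) (hk : k ≤ A.length) :
    IsLeast {ℓ : ℕ | ∃ p : Fin (ℓ + 1) → ℕ × ℕ,
        IsGridPath (A ++ A) B ℓ (k, 0) (A.length + k, B.length) p}
      (A.length + B.length - lcsLen (A.rotate k) B) := by
  have hA : (A ++ A).extract k (A.length + k) = A.rotate k := extract_append_self hk
  have hB : B.extract 0 B.length = B := by simp
  obtain ⟨⟨w, hwA, hwB, hw⟩, hmax⟩ := isGreatest_lcsLen (A.rotate k) B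
  constructor
  · obtain ⟨p, hp⟩ := exists_isGridPath_of_sublist_s4 (by omega) (by simpa using hk)
      (Nat.zero_le _) le_rfl (hA ▸ hwA) (hB ▸ hwB)
    have hℓ : A.length + k - k + (B.length - 0) - w.length =
        A.length + B.length - lcsLen (A.rotate k) B := by omega
    exact hℓ ▸ ⟨p, hp⟩
  · rintro ℓ ⟨p, hp⟩
    obtain ⟨w, hwA, hwB, hlen⟩ := hp.exists_sublist_s4
    have := hmax ⟨w, hA ▸ hwA, hB ▸ hwB, rfl⟩
    simp only at hlen
    omega
end
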